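/- For all integers p, q, r ≥ 3, the complete bipartite graph K_{2,r} is a contraction of W_{p,q} if and only if r = p + 1. -/

import Mathlib

open SimpleGraph

/-- A contraction model of a graph `H` in a graph `G`: a map sending each vertex of `H`
to a connected subset of vertices of `G`, these subsets partitioning the vertices of `G`,
with distinct vertices of `H` adjacent iff the corresponding subsets are joined by an
edge of `G`. -/
def IsContractionModel {V W : Type*} (G : SimpleGraph V) (H : SimpleGraph W)
    (φ : W → Set V) : Prop :=
  (∀ w : W, (G.induce (φ w)).Connected) ∧
  (∀ v : V, ∃! w : W, v ∈ φ w) ∧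
  ∀ w w' : W, w ≠ w' →
    (H.Adj w w' ↔ ∃ a ∈ φ w, ∃ b ∈ φ w', G.Adj a b)

/-- `H` is a contraction of `G`: there is a contraction model of `H` in `G`
(equivalently, `H` can be obtained from `G` by a sequence of edge contractions). -/
def IsContraction {V W : Type*} (H : SimpleGraph W) (G : SimpleGraph V) : Prop :=
  ∃ φ : W → Set V, IsContractionModel G H φ

/-- The graph `D_r`: two adjacent vertices together with `r` further vertices,
each adjacent to exactly the first two. `D_2` is the diamond (`K₄` minus an edge). -/
def Dgraph (r : ℕ) : SimpleGraph (Fin 2 ⊕ Fin r) :=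
  SimpleGraph.fromRel (fun x _ => x.isLeft)

/-- Finite graphs, with vertex set `Fin n` for some `n`. -/
def FinGraph : Type := Σ n : ℕ, SimpleGraph (Fin n)

/-- The contraction relation on finite graphs. -/
def FinGraph.Contr (H G : FinGraph) : Prop := IsContraction H.2 G.2

/-- A set of finite graphs is well-quasi-ordered by the contraction relation if every
infinite sequence of its members contains two graphs, the earlier being a contraction
of the later. -/
def WqoByContraction (S : Set FinGraph) : Prop :=
  ∀ f : ℕ → FinGraph, (∀ k, f k ∈ S) → ∃ i j : ℕ, i < j ∧ FinGraph.Contr (f i) (f j)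

/-- The graph `W_{p,q}`: the disjoint union of `p` isolated vertices (`Sum.inr ∘ Sum.inl`)
and the complete bipartite graph `K_{2,q}` (`Sum.inr ∘ Sum.inr`), together with two
non-adjacent poles (`Sum.inl`) adjacent to all the other `p + q + 2` vertices. -/
def Wgraph (p q : ℕ) : SimpleGraph (Fin 2 ⊕ (Fin p ⊕ (Fin 2 ⊕ Fin q))) :=
  SimpleGraph.fromRel (fun x y =>
    (x.isLeft ∧ y.isRight) ∨
    (∃ (s : Fin 2) (t : Fin q),
      x = Sum.inr (Sum.inr (Sum.inl s)) ∧ y = Sum.inr (Sum.inr (Sum.inr t))))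

/-! Deleting the edges at the two poles of `W_{p,q}` leaves `K_{2,q}` and `p + 2` isolated
vertices, that is, `p + 3` connected components. In a model of `K_{2,r}` with `r ≥ 3` the
branch sets owning the two poles are adjacent to all other branch sets, so they belong to the
two left vertices and contain nothing but the poles. Such a model therefore partitions
`W_{p,q}` minus its pole edges into connected, pairwise non-adjacent blocks, i.e. into its
connected components, and `2 + r = p + 3`. Conversely, contracting the copy of `K_{2,q}` to a
single vertex yields `K_{2,p+1}`. -/

namespace IsContractionModel

variable {V W : Type*} {G : SimpleGraph V} {H : SimpleGraph W} {φ : W → Set V}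

lemma nonempty (hφ : IsContractionModel G H φ) (w : W) : (φ w).Nonempty := by
  obtain ⟨⟨v, hv⟩⟩ := (hφ.1 w).nonempty
  exact ⟨v, hv⟩

lemma eq_of_mem (hφ : IsContractionModel G H φ) {v : V} {w w' : W} (hw : v ∈ φ w)
    (hw' : v ∈ φ w') : w = w' :=
  (hφ.2.1 v).unique hw hw'

lemma adj_of_mem (hφ : IsContractionModel G H φ) {a b : V} {w w' : W} (ha : a ∈ φ w)
    (hb : b ∈ φ w') (hne : w ≠ w') (hab : G.Adj a b) : H.Adj w w' :=
  (hφ.2.2 w w' hne).2 ⟨a, ha, b, hb, hab⟩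

lemma reachable_of_mem (hφ : IsContractionModel G H φ) {a b : V} {w : W} (ha : a ∈ φ w)
    (hb : b ∈ φ w) : G.Reachable a b :=
  ((hφ.1 w).preconnected ⟨a, ha⟩ ⟨b, hb⟩).map (Embedding.induce (φ w)).toHom

lemma bot_of_le {G' : SimpleGraph V} (hφ : IsContractionModel G H φ) (hle : G' ≤ G)
    (hblock : ∀ w, ∀ a ∈ φ w, ∀ b ∈ φ w, G.Adj a b → G'.Adj a b)
    (hcross : ∀ w w', H.Adj w w' → ∀ a ∈ φ w, ∀ b ∈ φ w', ¬ G'.Adj a b) :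
    IsContractionModel G' ⊥ φ := by
  refine ⟨fun w => ?_, hφ.2.1, fun w w' hne => ?_⟩
  · have hind : G'.induce (φ w) = G.induce (φ w) := by
      ext a b
      exact ⟨fun h => hle h, hblock w _ a.2 _ b.2⟩
    exact hind ▸ hφ.1 w
  · simp only [bot_adj, false_iff, not_exists, not_and]
    intro a ha b hb hab
    exact hcross w w' (hφ.adj_of_mem ha hb hne (hle hab)) a ha b hb hab

/-- The branch sets of a model of the edgeless graph are exactly the connected components. -/
lemma natCard_eq_natCard_connectedComponent (hφ : IsContractionModel G ⊥ φ) :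
    Nat.card W = Nat.card G.ConnectedComponent := by
  choose owner howner using fun v => (hφ.2.1 v).exists
  have howner_eq : ∀ {a b}, G.Reachable a b → owner a = owner b := by
    rintro a b ⟨walk⟩
    induction walk with
    | nil => rfl
    | cons hadj _ ih =>
      by_contra hne
      exact hφ.adj_of_mem (howner _) (howner _) (fun h => hne (h.trans ih)) hadj
  choose pt hpt using hφ.nonempty
  refine Nat.card_eq_of_bijective (fun w => G.connectedComponentMk (pt w))
    ⟨fun w w' h => ?_, ?_⟩
  · rw [hφ.eq_of_mem (hpt w) (howner _), hφ.eq_of_mem (hpt w') (howner _)]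
    exact howner_eq (ConnectedComponent.exact h)
  · rintro ⟨v⟩
    exact ⟨owner v, ConnectedComponent.sound (hφ.reachable_of_mem (hpt _) (howner v))⟩

end IsContractionModel

lemma completeBipartiteGraph_adj_iff_isLeft_ne {α β : Type*} {v w : α ⊕ β} :
    (completeBipartiteGraph α β).Adj v w ↔ v.isLeft ≠ w.isLeft := by
  cases v <;> cases w <;> simp

lemma completeBipartiteGraph_isLeft_of_forall_adj {α : Type*} [Nontrivial α] {r : ℕ}
    (hr : 3 ≤ r) {a b : α ⊕ Fin r}
    (h : ∀ w, w ≠ a → w ≠ b → (completeBipartiteGraph α (Fin r)).Adj w a ∧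
      (completeBipartiteGraph α (Fin r)).Adj w b) :
    a.isLeft ∧ b.isLeft ∧ a ≠ b := by
  obtain ⟨k, hka, hkb⟩ := Fin.exists_ne_and_ne_of_two_lt
    (a.elim (fun _ => ⟨0, by omega⟩) id) (b.elim (fun _ => ⟨0, by omega⟩) id) (by omega)
  have hk := h (Sum.inr k) (by clear h; cases a <;> simp_all) (by clear h; cases b <;> simp_all)
  obtain ⟨ha, hb⟩ : a.isLeft ∧ b.isLeft := by
    simpa [completeBipartiteGraph_adj_iff_isLeft_ne] using hk
  refine ⟨ha, hb, ?_⟩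
  rintro rfl
  obtain ⟨s, rfl⟩ := Sum.isLeft_iff.mp ha
  obtain ⟨s', hs'⟩ := exists_ne s
  simpa [completeBipartiteGraph_adj_iff_isLeft_ne] using
    (h (Sum.inl s') (by simpa using hs') (by simpa using hs')).1

namespace Wgraph

variable {p q : ℕ}

abbrev Vertex (p q : ℕ) : Type := Fin 2 ⊕ (Fin p ⊕ (Fin 2 ⊕ Fin q))

/-- `W_{p,q}` with the edges at its poles deleted: the copy of `K_{2,q}` together with
`p + 2` isolated vertices. -/
def core (p q : ℕ) : SimpleGraph (Vertex p q) :=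
  SimpleGraph.fromRel (fun x y => ∃ (s : Fin 2) (t : Fin q),
    x = Sum.inr (Sum.inr (Sum.inl s)) ∧ y = Sum.inr (Sum.inr (Sum.inr t)))

lemma core_le : core p q ≤ Wgraph p q := by
  intro x y
  simp only [core, Wgraph, fromRel_adj]
  rintro ⟨hne, h | h⟩
  exacts [⟨hne, .inl (.inr h)⟩, ⟨hne, .inr (.inr h)⟩]

lemma adj_of_isLeft_ne {x y : Vertex p q} (h : x.isLeft ≠ y.isLeft) :
    (Wgraph p q).Adj x y := by
  cases x <;> cases y <;> simp_all [Wgraph]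

lemma core_adj_of_adj {x y : Vertex p q} (h : (Wgraph p q).Adj x y)
    (hxy : x.isLeft = y.isLeft) : (core p q).Adj x y := by
  cases x <;> cases y <;> simp_all [Wgraph, core]

lemma exists_eq_of_core_adj {x y : Vertex p q} (h : (core p q).Adj x y) :
    ∃ z z', x = Sum.inr (Sum.inr z) ∧ y = Sum.inr (Sum.inr z') := by
  simp only [core, fromRel_adj] at h
  obtain ⟨-, ⟨s, t, rfl, rfl⟩ | ⟨s, t, rfl, rfl⟩⟩ := h
  exacts [⟨_, _, rfl, rfl⟩, ⟨_, _, rfl, rfl⟩]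

lemma isContractionModel_core_bot {α β : Type*} {φ : α ⊕ β → Set (Vertex p q)}
    (hφ : IsContractionModel (Wgraph p q) (completeBipartiteGraph α β) φ)
    (hside : ∀ w, ∀ v ∈ φ w, v.isLeft = w.isLeft) :
    IsContractionModel (core p q) ⊥ φ := by
  refine hφ.bot_of_le core_le
    (fun w a ha b hb hab => core_adj_of_adj hab ((hside w a ha).trans (hside w b hb).symm))
    (fun w w' hww' a ha b hb hab => ?_)
  obtain ⟨z, z', rfl, rfl⟩ := exists_eq_of_core_adj hab
  exact completeBipartiteGraph_adj_iff_isLeft_ne.1 hww'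
    ((hside w _ ha).symm.trans (hside w' (Sum.inr (Sum.inr z')) hb))

lemma isLeft_eq_of_mem_model {r : ℕ} (hr : 3 ≤ r)
    {φ : Fin 2 ⊕ Fin r → Set (Vertex p q)}
    (hφ : IsContractionModel (Wgraph p q) (completeBipartiteGraph (Fin 2) (Fin r)) φ) :
    ∀ w, ∀ v ∈ φ w, v.isLeft = w.isLeft := by
  obtain ⟨A, hA⟩ := (hφ.2.1 (Sum.inl 0)).exists
  obtain ⟨B, hB⟩ := (hφ.2.1 (Sum.inl 1)).exists
  have hpole : ∀ w s, Sum.inl s ∈ φ w → w = A ∨ w = B := by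
    intro w s hs
    fin_cases s
    exacts [.inl (hφ.eq_of_mem hs hA), .inr (hφ.eq_of_mem hs hB)]
  have hdom : ∀ w, w ≠ A → w ≠ B → (completeBipartiteGraph (Fin 2) (Fin r)).Adj w A ∧
      (completeBipartiteGraph (Fin 2) (Fin r)).Adj w B := by
    intro w hwA hwB
    obtain ⟨v | x, hv⟩ := hφ.nonempty w
    · exact ((hpole w v hv).elim hwA hwB).elim
    · exact ⟨hφ.adj_of_mem hv hA hwA (adj_of_isLeft_ne (by simp)),
        hφ.adj_of_mem hv hB hwB (adj_of_isLeft_ne (by simp))⟩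
  obtain ⟨hAl, hBl, hAB⟩ := completeBipartiteGraph_isLeft_of_forall_adj hr hdom
  rintro w (s | x) hv
  · rcases hpole w s hv with rfl | rfl <;> simp [hAl, hBl]
  · have hwA : w ≠ A := by
      rintro rfl
      exact completeBipartiteGraph_adj_iff_isLeft_ne.1
        (hφ.adj_of_mem hv hB hAB (adj_of_isLeft_ne (by simp))) (hAl.trans hBl.symm)
    have hwB : w ≠ B := by
      rintro rfl
      exact completeBipartiteGraph_adj_iff_isLeft_ne.1
        (hφ.adj_of_mem hv hA hAB.symm (adj_of_isLeft_ne (by simp))) (hBl.trans hAl.symm)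
    simpa [hAl] using completeBipartiteGraph_adj_iff_isLeft_ne.1 (hdom w hwA hwB).1

def collapse (p q : ℕ) : Vertex p q → Fin 2 ⊕ Fin (p + 1)
  | Sum.inl s => Sum.inl s
  | Sum.inr (Sum.inl i) => Sum.inr i.castSucc
  | Sum.inr (Sum.inr _) => Sum.inr (Fin.last p)

lemma isLeft_collapse (v : Vertex p q) :
    (collapse p q v).isLeft = v.isLeft := by
  rcases v with _ | _ | _ <;> rfl

lemma collapse_surjective (hq : 0 < q) : Function.Surjective (collapse p q) := by
  rintro (s | j)
  · exact ⟨Sum.inl s, rfl⟩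
  · induction j using Fin.lastCases with
    | last => exact ⟨Sum.inr (Sum.inr (Sum.inr ⟨0, hq⟩)), rfl⟩
    | cast i => exact ⟨Sum.inr (Sum.inl i), rfl⟩

lemma eq_of_collapse_eq {a b : Vertex p q}
    (h : collapse p q a = collapse p q b) (ha : collapse p q a ≠ Sum.inr (Fin.last p)) :
    a = b := by
  rcases a with _ | _ | _ <;> rcases b with _ | _ | _ <;> simp_all [collapse]

lemma adj_inl_inr (s : Fin 2) (t : Fin q) :
    (Wgraph p q).Adj (Sum.inr (Sum.inr (Sum.inl s))) (Sum.inr (Sum.inr (Sum.inr t))) :=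
  core_le ⟨by simp, .inl ⟨s, t, rfl, rfl⟩⟩

lemma connected_induce_collapse_fiber (hq : 0 < q) (w : Fin 2 ⊕ Fin (p + 1)) :
    ((Wgraph p q).induce (collapse p q ⁻¹' {w})).Connected := by
  by_cases hlast : w = Sum.inr (Fin.last p)
  · subst hlast
    have hreach : ∀ {a b} (ha : collapse p q a = Sum.inr (Fin.last p))
        (hb : collapse p q b = Sum.inr (Fin.last p)), (Wgraph p q).Adj a b →
        ((Wgraph p q).induce (collapse p q ⁻¹' {Sum.inr (Fin.last p)})).Reachable
          ⟨a, ha⟩ ⟨b, hb⟩ :=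
      fun _ _ h => Adj.reachable (G := (Wgraph p q).induce _) h
    rw [connected_iff_exists_forall_reachable]
    refine ⟨⟨Sum.inr (Sum.inr (Sum.inr ⟨0, hq⟩)), rfl⟩, fun ⟨v, hv⟩ => ?_⟩
    rcases v with _ | _ | s | t
    · simp [collapse] at hv
    · simp [collapse] at hv
    · exact hreach _ hv (adj_inl_inr s _).symm
    · exact (hreach _ rfl (adj_inl_inr 0 _).symm).trans (hreach rfl hv (adj_inl_inr 0 t))
  · obtain ⟨c, rfl⟩ := collapse_surjective hq w
    have : Subsingleton (collapse p q ⁻¹' {collapse p q c}) :=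
      ⟨fun a b => Subtype.ext <|
        eq_of_collapse_eq (a.2.trans b.2.symm) fun h => hlast (a.2.symm.trans h)⟩
    exact (connected_iff _).2 ⟨Preconnected.of_subsingleton, ⟨⟨c, rfl⟩⟩⟩

lemma isContractionModel_collapse (hq : 0 < q) :
    IsContractionModel (Wgraph p q) (completeBipartiteGraph (Fin 2) (Fin (p + 1)))
      (fun w => collapse p q ⁻¹' {w}) := by
  refine ⟨connected_induce_collapse_fiber hq,
    fun v => ⟨collapse p q v, rfl, fun w h => h.symm⟩, fun w w' hne => ⟨fun hww' => ?_, ?_⟩⟩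
  · obtain ⟨a, rfl⟩ := collapse_surjective hq w
    obtain ⟨b, rfl⟩ := collapse_surjective hq w'
    refine ⟨a, rfl, b, rfl, adj_of_isLeft_ne ?_⟩
    simpa [isLeft_collapse] using completeBipartiteGraph_adj_iff_isLeft_ne.1 hww'
  · rintro ⟨a, rfl, b, rfl, hab⟩
    rw [completeBipartiteGraph_adj_iff_isLeft_ne, isLeft_collapse, isLeft_collapse]
    intro hside
    obtain ⟨z, z', rfl, rfl⟩ := exists_eq_of_core_adj (core_adj_of_adj hab hside)
    exact hne rfl

lemma natCard_connectedComponent_core (hq : 0 < q) :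
    Nat.card (core p q).ConnectedComponent = p + 3 := by
  have := (isContractionModel_core_bot (isContractionModel_collapse (p := p) hq)
    (fun w v hv => hv ▸ (isLeft_collapse v).symm)).natCard_eq_natCard_connectedComponent
  rw [← this, Nat.card_sum, Nat.card_fin, Nat.card_fin]
  omega

end Wgraph

theorem completeBipartite_contraction_Wgraph_iff_general (p q r : ℕ)
    (hq : 3 ≤ q) (hr : 3 ≤ r) :
    IsContraction (completeBipartiteGraph (Fin 2) (Fin r)) (Wgraph p q) ↔ r = p + 1 := by
  constructor
  · rintro ⟨φ, hφ⟩
    have hcard := (Wgraph.isContractionModel_core_bot hφ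
      (Wgraph.isLeft_eq_of_mem_model hr hφ)).natCard_eq_natCard_connectedComponent
    rw [Wgraph.natCard_connectedComponent_core (by omega), Nat.card_sum, Nat.card_fin,
      Nat.card_fin] at hcard
    omega
  · rintro rfl
    exact ⟨_, Wgraph.isContractionModel_collapse (by omega)⟩

/-- For all integers `p, q, r ≥ 3`, the complete bipartite graph
`K_{2,r}` is a contraction of `W_{p,q}` if and only if `r = p + 1`. -/
theorem completeBipartite_contraction_Wgraph_iff (p q r : ℕ)
    (hp : 3 ≤ p) (hq : 3 ≤ q) (hr : 3 ≤ r) :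
    IsContraction (completeBipartiteGraph (Fin 2) (Fin r)) (Wgraph p q) ↔ r = p + 1 :=
  completeBipartite_contraction_Wgraph_iff_general p q r hq hr
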